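/- The Euler-based influence function ι_w(s) = 1 - (1-w²)/(1 + w·eˢ) satisfies ι_w(s) ≥ w² for all s ∈ ℝ and w ∈ [0,1], and lim_{s → -∞} ι_w(s) = w²; hence for w > 0 it is not open-minded (its infimum w² is strictly positive). -/

import Mathlib

open Filter Topology

noncomputable def eulerInfluence (w s : ℝ) : ℝ :=
  1 - (1 - w ^ 2) / (1 + w * Real.exp s)

lemma sq_le_eulerInfluence {w : ℝ} (hw₀ : 0 ≤ w) (hw₁ : w ≤ 1) (s : ℝ) :
    w ^ 2 ≤ eulerInfluence w s := by
  have hden : 1 ≤ 1 + w * Real.exp s := le_add_of_nonneg_right (by positivity)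
  have hnum : 0 ≤ 1 - w ^ 2 := by nlinarith
  have : (1 - w ^ 2) / (1 + w * Real.exp s) ≤ 1 - w ^ 2 := div_le_self hnum hden
  unfold eulerInfluence
  linarith

lemma tendsto_eulerInfluence_atBot (w : ℝ) :
    Tendsto (eulerInfluence w) atBot (𝓝 (w ^ 2)) := by
  have hden : Tendsto (fun s => 1 + w * Real.exp s) atBot (𝓝 1) := by
    simpa using (Real.tendsto_exp_atBot.const_mul w).const_add 1
  have := ((tendsto_const_nhds (x := 1 - w ^ 2)).div hden one_ne_zero).const_sub 1
  rwa [div_one, sub_sub_cancel] at this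

lemma not_tendsto_eulerInfluence_atBot_zero {w : ℝ} (hw : w ≠ 0) :
    ¬ Tendsto (eulerInfluence w) atBot (𝓝 0) := fun h =>
  pow_ne_zero 2 hw (tendsto_nhds_unique (tendsto_eulerInfluence_atBot w) h)

theorem euler_not_open_minded (w : ℝ) (hw : w ∈ Set.Icc (0:ℝ) 1) :
    (∀ s : ℝ, w ^ 2 ≤ 1 - (1 - w ^ 2) / (1 + w * Real.exp s)) ∧
    Tendsto (fun s : ℝ => 1 - (1 - w ^ 2) / (1 + w * Real.exp s)) atBot (nhds (w ^ 2)) ∧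
    (0 < w → ¬ Tendsto (fun s : ℝ => 1 - (1 - w ^ 2) / (1 + w * Real.exp s)) atBot (nhds 0)) :=
  ⟨sq_le_eulerInfluence hw.1 hw.2, tendsto_eulerInfluence_atBot w,
    fun hw₀ => not_tendsto_eulerInfluence_atBot_zero hw₀.ne'⟩
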